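/- In the completed enveloping algebra of $\widehat{\mathfrak{gl}}(m|n)$, for $i \ne 0$ and integer $a > 0$, the commutator $[\hbar(-1)^{p(i)}\sum_{s\ge 0}\sum_{k=1}^{i}(-1)^{p(k)}E_{i,k}(-s)E_{k,i}(s),\ ((-1)^{p(i)}E_{i,i}-(-1)^{p(i+1)}E_{i+1,i+1})\otimes t^a]$ equals $\hbar\sum_{s\ge0}\sum_{k=1}^{i-1}(-1)^{p(k)}E_{i,k}(-s)E_{k,i}(s+a) - \hbar\sum_{s\ge0}\sum_{k=1}^{i-1}(-1)^{p(k)}E_{i,k}(-s+a)E_{k,i}(s) - \hbar a c E_{i,i}(a)$, where $c$ is the central charge (the term $\hbar\sum_{s\ge0}\delta_{s+a,0}scE_{i,i}(-s)$ vanishes for $a>0$). -/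

import Mathlib

/-!
The Cartan element `h = (-1)^{p(i)} E_{ii}(a) - (-1)^{p(i+1)} E_{i+1,i+1}(a)` is even, so bracketing
with it is an ordinary derivation. On `E_{ik}(-s) E_{ki}(s)` with `k < i` only `E_{ii}(a)` acts,
shifting one of the two modes by `a`. On `E_{ii}(-s) E_{ii}(s)` only the central terms act, and they
survive only for `s = a`, where they contribute `-a c E_{ii}(a)` once the signs `(-1)^{2p} = 1`
are used. Bracketing with a fixed element is continuous, so it commutes with the sum over `s`.
-/

open Finset

section SuperAffineGl

attribute [local instance] LieRing.ofAssociativeRing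

variable {A : Type*} [Ring A]

lemma Ring.mul_lie (x y z : A) : ⁅x * y, z⁆ = x * ⁅y, z⁆ + ⁅x, z⁆ * y := by
  simp only [Ring.lie_def]
  noncomm_ring

lemma HasSum.lie_right [TopologicalSpace A] [IsTopologicalRing A] {ι : Type*} {f : ι → A} {x : A}
    (hf : HasSum f x) (y : A) : HasSum (fun s => ⁅f s, y⁆) ⁅x, y⁆ := by
  simpa only [Ring.lie_def] using (hf.mul_right y).sub (hf.mul_left y)

variable [Algebra ℂ A]

/-- `EE i j r` stands for `E_{i,j} ⊗ t^r` and `cc` for the central charge `c`, with `z = 1`. -/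
def AffineGlRelations (p : ℕ → ℕ) (sg : ℕ → ℂ) (EE : ℕ → ℕ → ℤ → A) (cc : ℂ) : Prop :=
  ∀ i j k l : ℕ, ∀ r s : ℤ,
      EE i j r * EE k l s
        - ((-1 : ℂ) ^ ((p i + p j) * (p k + p l))) • (EE k l s * EE i j r)
      = (if j = k then EE i l (r + s) else 0)
        - ((-1 : ℂ) ^ ((p i + p j) * (p k + p l))) •
            (if l = i then EE k j (r + s) else 0)
        + (if r + s = 0 then
            (r : ℂ) * ((if j = k ∧ l = i then sg i * cc else 0)
              + (if i = j ∧ k = l then sg i * sg k else 0))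
          else 0) • (1 : A)

namespace AffineGlRelations

variable {p : ℕ → ℕ} {sg : ℕ → ℂ} {EE : ℕ → ℕ → ℤ → A} {cc : ℂ}

lemma lie_diag (hrel : AffineGlRelations p sg EE cc) (x y j : ℕ) (r s : ℤ) :
    ⁅EE x y r, EE j j s⁆
      = (if y = j then EE x j (r + s) else 0) - (if j = x then EE j y (r + s) else 0)
        + (if r + s = 0 then
            (r : ℂ) * ((if y = j ∧ j = x then sg x * cc else 0)
              + (if x = y then sg x * sg j else 0)) else 0) • (1 : A) := by
  have hsign : (-1 : ℂ) ^ ((p x + p y) * (p j + p j)) = 1 :=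
    Even.neg_one_pow ⟨(p x + p y) * p j, by ring⟩
  simpa [hsign, Ring.lie_def] using hrel x y j j r s

lemma lie_offDiag_diag (hrel : AffineGlRelations p sg EE cc) {x y : ℕ} (hxy : x ≠ y) (j : ℕ)
    (r s : ℤ) :
    ⁅EE x y r, EE j j s⁆
      = (if y = j then EE x j (r + s) else 0) - (if j = x then EE j y (r + s) else 0) := by
  have hcycle : ¬(y = j ∧ j = x) := by omega
  simp [hrel.lie_diag, hxy, hcycle]

lemma lie_diag_diag (hrel : AffineGlRelations p sg EE cc) (x j : ℕ) (r s : ℤ) :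
    ⁅EE x x r, EE j j s⁆
      = (if r + s = 0 then
          (r : ℂ) * ((if x = j then sg x * cc else 0) + sg x * sg j) else 0) • (1 : A) := by
  rw [hrel.lie_diag]
  by_cases h : x = j
  · subst h; simp
  · simp [h, Ne.symm h]

lemma lie_offDiagProd_diag (hrel : AffineGlRelations p sg EE cc) {i k j : ℕ} (hki : k ≠ i)
    (hjk : j ≠ k) (r s : ℤ) :
    ⁅EE i k (-r) * EE k i r, EE j j s⁆
      = if i = j then EE i k (-r) * EE k i (r + s) - EE i k (-r + s) * EE k i r else 0 := by
  rw [Ring.mul_lie, hrel.lie_offDiag_diag hki.symm, hrel.lie_offDiag_diag hki]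
  by_cases hij : i = j
  · subst hij; simp [hki, hki.symm, sub_eq_add_neg]
  · simp [hij, Ne.symm hij, hjk, hjk.symm]

lemma lie_diagProd_diag (hrel : AffineGlRelations p sg EE cc) (i j : ℕ) {r s : ℤ} (hr : 0 ≤ r)
    (hs : 0 < s) :
    ⁅EE i i (-r) * EE i i r, EE j j s⁆
      = (if r = s then
          -(s : ℂ) * ((if i = j then sg i * cc else 0) + sg i * sg j) else 0) • EE i i s := by
  have hrs : r + s ≠ 0 := by omega
  rw [Ring.mul_lie, hrel.lie_diag_diag, hrel.lie_diag_diag]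
  by_cases h : r = s
  · subst h; simp [hs.ne']
  · have h' : -r + s ≠ 0 := by omega
    simp [h, h', hrs]

section Cartan

variable {i : ℕ} {a : ℤ}

lemma lie_offDiagProd_cartan (hrel : AffineGlRelations p sg EE cc) {k : ℕ} (hk : k < i) (r : ℤ) :
    ⁅EE i k (-r) * EE k i r, sg i • EE i i a - sg (i + 1) • EE (i + 1) (i + 1) a⁆
      = sg i • (EE i k (-r) * EE k i (r + a) - EE i k (-r + a) * EE k i r) := by
  rw [lie_sub, lie_smul, lie_smul, hrel.lie_offDiagProd_diag (by omega) (by omega),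
    hrel.lie_offDiagProd_diag (by omega) (by omega)]
  simp

lemma lie_diagProd_cartan (hrel : AffineGlRelations p sg EE cc) (hsg : ∀ j, sg j * sg j = 1)
    {r : ℤ} (hr : 0 ≤ r) (ha : 0 < a) :
    ⁅EE i i (-r) * EE i i r, sg i • EE i i a - sg (i + 1) • EE (i + 1) (i + 1) a⁆
      = (if r = a then -((a : ℂ) * cc) else 0) • EE i i a := by
  rw [lie_sub, lie_smul, lie_smul, hrel.lie_diagProd_diag _ _ hr ha,
    hrel.lie_diagProd_diag _ _ hr ha, smul_smul, smul_smul, ← sub_smul]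
  have hne : i ≠ i + 1 := by omega
  simp only [if_true, hne, if_false, zero_add]
  congr 1
  split_ifs
  · linear_combination (-(a : ℂ) * cc - a * sg i) * hsg i + (a * sg i) * hsg (i + 1)
  · simp

lemma smul_lie_sum_cartan (hrel : AffineGlRelations p sg EE cc) (hsg : ∀ j, sg j * sg j = 1)
    (hi : 1 ≤ i) {r : ℤ} (hr : 0 ≤ r) (ha : 0 < a) (ℏ : ℂ) :
    (ℏ * sg i) • ⁅∑ k ∈ Icc 1 i, sg k • (EE i k (-r) * EE k i r),
        sg i • EE i i a - sg (i + 1) • EE (i + 1) (i + 1) a⁆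
      = ℏ • ∑ k ∈ Icc 1 (i - 1), sg k • (EE i k (-r) * EE k i (r + a))
        - ℏ • ∑ k ∈ Icc 1 (i - 1), sg k • (EE i k (-r + a) * EE k i r)
        - if r = a then (ℏ * a * cc) • EE i i a else 0 := by
  obtain ⟨i, rfl⟩ : ∃ i', i = i' + 1 := ⟨i - 1, by omega⟩
  have hoff : ∀ k ∈ Icc 1 i, sg k • ⁅EE (i + 1) k (-r) * EE k (i + 1) r,
      sg (i + 1) • EE (i + 1) (i + 1) a - sg (i + 1 + 1) • EE (i + 1 + 1) (i + 1 + 1) a⁆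
      = sg (i + 1) • sg k • (EE (i + 1) k (-r) * EE k (i + 1) (r + a)
          - EE (i + 1) k (-r + a) * EE k (i + 1) r) := fun k hk => by
    rw [hrel.lie_offDiagProd_cartan (by simp at hk; omega), smul_comm]
  rw [Nat.add_sub_cancel, sum_Icc_succ_top (by omega), add_lie, sum_lie, smul_lie,
    hrel.lie_diagProd_cartan hsg hr ha, sum_congr rfl fun k _ => smul_lie _ _ _,
    sum_congr rfl hoff, ← smul_sum, smul_add, smul_smul, smul_smul, mul_assoc, hsg, mul_one]
  simp only [smul_sub, sum_sub_distrib]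
  split_ifs
  · rw [smul_smul, mul_neg, neg_smul, ← mul_assoc]
    abel
  · simp

lemma hasSum_smul_lie_cartan [TopologicalSpace A] [IsTopologicalRing A]
    (hrel : AffineGlRelations p sg EE cc) (hsg : ∀ j, sg j * sg j = 1) (hi : 1 ≤ i) (ha : 0 < a)
    (ℏ : ℂ) (hsum : Summable fun s : ℕ => ∑ k ∈ Icc 1 i, sg k • (EE i k (-(s : ℤ)) * EE k i s)) :
    HasSum (fun s : ℕ => ℏ • ∑ k ∈ Icc 1 (i - 1), sg k • (EE i k (-(s : ℤ)) * EE k i (s + a))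
        - ℏ • ∑ k ∈ Icc 1 (i - 1), sg k • (EE i k (-(s : ℤ) + a) * EE k i s)
        - if (s : ℤ) = a then (ℏ * a * cc) • EE i i a else 0)
      ⁅(ℏ * sg i) • ∑' s : ℕ, ∑ k ∈ Icc 1 i, sg k • (EE i k (-(s : ℤ)) * EE k i s),
        sg i • EE i i a - sg (i + 1) • EE (i + 1) (i + 1) a⁆ := by
  rw [smul_lie]
  convert (hsum.hasSum.lie_right _).const_smul (ℏ * sg i) using 1
  funext s
  exact (hrel.smul_lie_sum_cartan hsg hi s.cast_nonneg ha ℏ).symm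

end Cartan

end AffineGlRelations
end SuperAffineGl

theorem stmt15_general
    (A : Type*) [Ring A] [Algebra ℂ A] [TopologicalSpace A] [IsTopologicalRing A]
    [T2Space A]
    (p : ℕ → ℕ)
    (sg : ℕ → ℂ) (hsg : ∀ j, sg j = (-1 : ℂ) ^ (p j))
    (EE : ℕ → ℕ → ℤ → A) (cc ℏ : ℂ)
    -- the commutation relations of affine gl(m|n) with c = cc·1 and z = 1:
    (hrel : ∀ i j k l : ℕ, ∀ r s : ℤ,
      EE i j r * EE k l s
        - ((-1 : ℂ) ^ ((p i + p j) * (p k + p l))) • (EE k l s * EE i j r)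
      = (if j = k then EE i l (r + s) else 0)
        - ((-1 : ℂ) ^ ((p i + p j) * (p k + p l))) •
            (if l = i then EE k j (r + s) else 0)
        + (if r + s = 0 then
            (r : ℂ) * ((if j = k ∧ l = i then sg i * cc else 0)
              + (if i = j ∧ k = l then sg i * sg k else 0))
          else 0) • (1 : A))
    (i : ℕ) (hi : 1 ≤ i) (a : ℤ) (ha : 0 < a)
    (hsum1 : Summable fun s : ℕ =>
      ∑ k ∈ Finset.Icc 1 i, sg k • (EE i k (-(s : ℤ)) * EE k i (s : ℤ)))
    (hsum2 : Summable fun s : ℕ =>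
      ∑ k ∈ Finset.Icc 1 (i - 1), sg k • (EE i k (-(s : ℤ)) * EE k i ((s : ℤ) + a)))
    (hsum3 : Summable fun s : ℕ =>
      ∑ k ∈ Finset.Icc 1 (i - 1), sg k • (EE i k (-(s : ℤ) + a) * EE k i (s : ℤ))) :
    ((ℏ * sg i) • ∑' s : ℕ,
        ∑ k ∈ Finset.Icc 1 i, sg k • (EE i k (-(s : ℤ)) * EE k i (s : ℤ)))
        * (sg i • EE i i a - sg (i + 1) • EE (i + 1) (i + 1) a)
      - (sg i • EE i i a - sg (i + 1) • EE (i + 1) (i + 1) a)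
        * ((ℏ * sg i) • ∑' s : ℕ,
            ∑ k ∈ Finset.Icc 1 i, sg k • (EE i k (-(s : ℤ)) * EE k i (s : ℤ)))
    = ℏ • (∑' s : ℕ, ∑ k ∈ Finset.Icc 1 (i - 1),
          sg k • (EE i k (-(s : ℤ)) * EE k i ((s : ℤ) + a)))
      - ℏ • (∑' s : ℕ, ∑ k ∈ Finset.Icc 1 (i - 1),
          sg k • (EE i k (-(s : ℤ) + a) * EE k i (s : ℤ)))
      - (ℏ * (a : ℂ) * cc) • EE i i a := by
  have hsq (j : ℕ) : sg j * sg j = 1 := by rw [hsg, ← pow_add, Even.neg_one_pow ⟨p j, rfl⟩]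
  have hind : HasSum (fun s : ℕ => if (s : ℤ) = a then (ℏ * a * cc) • EE i i a else 0)
      ((ℏ * a * cc) • EE i i a) := by
    lift a to ℕ using ha.le
    simpa using hasSum_ite_eq a _
  exact (AffineGlRelations.hasSum_smul_lie_cartan hrel hsq hi ha ℏ hsum1).unique
    (((hsum2.hasSum.const_smul ℏ).sub (hsum3.hasSum.const_smul ℏ)).sub hind)

/-- in the completed enveloping algebra of affine gl(m|n)
(modelled by a topological algebra `A` with elements `EE i j r` representing
`E_{i,j} ⊗ t^r`, central charge `cc` and `z = 1`), for `i ≠ 0` and `a > 0`,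
`[ℏ(-1)^{p(i)} Σ_{s≥0} Σ_{k=1}^{i} (-1)^{p(k)} E_{i,k}(-s)E_{k,i}(s),
  ((-1)^{p(i)}E_{i,i} - (-1)^{p(i+1)}E_{i+1,i+1}) t^a]
 = ℏ Σ_{s≥0} Σ_{k=1}^{i-1} (-1)^{p(k)} E_{i,k}(-s)E_{k,i}(s+a)
   - ℏ Σ_{s≥0} Σ_{k=1}^{i-1} (-1)^{p(k)} E_{i,k}(-s+a)E_{k,i}(s)
   - ℏ a cc E_{i,i}(a)`. -/
theorem stmt15 (m n : ℕ) (hm : 2 ≤ m) (hn : 2 ≤ n) (hmn : m ≠ n)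
    (A : Type*) [Ring A] [Algebra ℂ A] [TopologicalSpace A] [IsTopologicalRing A]
    [T2Space A]
    (p : ℕ → ℕ) (hp : ∀ j, p j = if j ≤ m then 0 else 1)
    (sg : ℕ → ℂ) (hsg : ∀ j, sg j = (-1 : ℂ) ^ (p j))
    (EE : ℕ → ℕ → ℤ → A) (cc ℏ : ℂ)
    -- the commutation relations of affine gl(m|n) with c = cc·1 and z = 1:
    (hrel : ∀ i j k l : ℕ, ∀ r s : ℤ,
      EE i j r * EE k l s
        - ((-1 : ℂ) ^ ((p i + p j) * (p k + p l))) • (EE k l s * EE i j r)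
      = (if j = k then EE i l (r + s) else 0)
        - ((-1 : ℂ) ^ ((p i + p j) * (p k + p l))) •
            (if l = i then EE k j (r + s) else 0)
        + (if r + s = 0 then
            (r : ℂ) * ((if j = k ∧ l = i then sg i * cc else 0)
              + (if i = j ∧ k = l then sg i * sg k else 0))
          else 0) • (1 : A))
    (i : ℕ) (hi : 1 ≤ i) (hi' : i ≤ m + n - 1) (a : ℤ) (ha : 0 < a)
    (hsum1 : Summable fun s : ℕ =>
      ∑ k ∈ Finset.Icc 1 i, sg k • (EE i k (-(s : ℤ)) * EE k i (s : ℤ)))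
    (hsum2 : Summable fun s : ℕ =>
      ∑ k ∈ Finset.Icc 1 (i - 1), sg k • (EE i k (-(s : ℤ)) * EE k i ((s : ℤ) + a)))
    (hsum3 : Summable fun s : ℕ =>
      ∑ k ∈ Finset.Icc 1 (i - 1), sg k • (EE i k (-(s : ℤ) + a) * EE k i (s : ℤ))) :
    ((ℏ * sg i) • ∑' s : ℕ,
        ∑ k ∈ Finset.Icc 1 i, sg k • (EE i k (-(s : ℤ)) * EE k i (s : ℤ)))
        * (sg i • EE i i a - sg (i + 1) • EE (i + 1) (i + 1) a)
      - (sg i • EE i i a - sg (i + 1) • EE (i + 1) (i + 1) a)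
        * ((ℏ * sg i) • ∑' s : ℕ,
            ∑ k ∈ Finset.Icc 1 i, sg k • (EE i k (-(s : ℤ)) * EE k i (s : ℤ)))
    = ℏ • (∑' s : ℕ, ∑ k ∈ Finset.Icc 1 (i - 1),
          sg k • (EE i k (-(s : ℤ)) * EE k i ((s : ℤ) + a)))
      - ℏ • (∑' s : ℕ, ∑ k ∈ Finset.Icc 1 (i - 1),
          sg k • (EE i k (-(s : ℤ) + a) * EE k i (s : ℤ)))
      - (ℏ * (a : ℂ) * cc) • EE i i a :=
  stmt15_general A p sg hsg EE cc ℏ hrel i hi a ha hsum1 hsum2 hsum3
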